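/- For the scalar system with a² < 1, q > 0, the supremum of the self-trigger signal over all horizons is sup_{M≥1} (V_o^M(P̄) − P̄) = q/(1−a²) − P̄ when V_o(P̄) ≥ P̄; hence if the communication cost C exceeds q/(1−a²) − P̄, the self-trigger never fires (no M ≥ 1 satisfies V_o^M(P̄) − P̄ ≥ C). -/
import Mathlib

theorem stmt_17 (a q Pbar C : ℝ) (ha : a ^ 2 < 1) (ha0 : 0 ≤ a ^ 2) (hq : 0 < q)
    (hP : 0 ≤ Pbar) (hC : 0 < C)
    (Vo : ℝ → ℝ) (hVo : ∀ P, Vo P = a ^ 2 * P + q) (hstep : Pbar ≤ Vo Pbar) :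
    (⨆ M : {M : ℕ // 1 ≤ M}, (Vo^[(M : ℕ)] Pbar - Pbar)) = q / (1 - a ^ 2) - Pbar ∧
    (q / (1 - a ^ 2) - Pbar < C → ∀ M : ℕ, 1 ≤ M → Vo^[M] Pbar - Pbar < C) := by
  have h1 : (0:ℝ) < 1 - a ^ 2 := by linarith
  set L : ℝ := q / (1 - a ^ 2) with hL
  have hLq : L * (1 - a ^ 2) = q := div_mul_cancel₀ q h1.ne'
  -- closed form
  have hiter : ∀ n : ℕ, Vo^[n] Pbar - Pbar = (L - Pbar) * (1 - (a ^ 2) ^ n) := by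
    intro n
    induction n with
    | zero => simp
    | succ n ih =>
      rw [Function.iterate_succ_apply', hVo]
      have : Vo^[n] Pbar = (L - Pbar) * (1 - (a ^ 2) ^ n) + Pbar := by linarith
      rw [this, ← hLq]; ring
  have hD : 0 ≤ L - Pbar := by
    rw [hVo] at hstep
    nlinarith [hLq]
  have hub : ∀ n : ℕ, Vo^[n] Pbar - Pbar ≤ L - Pbar := by
    intro n
    rw [hiter n]
    nlinarith [pow_nonneg ha0 n]
  constructor
  · apply le_antisymm
    · apply ciSup_le
      intro ⟨M, hM⟩
      exact hub M
    · -- limit argument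
      have hne : Nonempty {M : ℕ // 1 ≤ M} := ⟨⟨1, le_refl 1⟩⟩
      have hbdd : BddAbove (Set.range fun M : {M : ℕ // 1 ≤ M} => Vo^[(M : ℕ)] Pbar - Pbar) := by
        refine ⟨L - Pbar, ?_⟩
        rintro x ⟨⟨M, hM⟩, rfl⟩
        exact hub M
      set S := ⨆ M : {M : ℕ // 1 ≤ M}, (Vo^[(M : ℕ)] Pbar - Pbar) with hS
      have hle : ∀ n : ℕ, Vo^[n+1] Pbar - Pbar ≤ S := by
        intro n
        exact le_ciSup hbdd ⟨n+1, Nat.succ_le_succ (Nat.zero_le n)⟩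
      have htend : Filter.Tendsto (fun n : ℕ => Vo^[n+1] Pbar - Pbar)
          Filter.atTop (nhds (L - Pbar)) := by
        have h0 : Filter.Tendsto (fun n : ℕ => (a ^ 2) ^ (n+1)) Filter.atTop (nhds 0) :=
          (tendsto_pow_atTop_nhds_zero_of_lt_one ha0 ha).comp (Filter.tendsto_add_atTop_nat 1)
        have : Filter.Tendsto (fun n : ℕ => (L - Pbar) * (1 - (a ^ 2) ^ (n+1)))
            Filter.atTop (nhds ((L - Pbar) * (1 - 0))) :=
          Filter.Tendsto.const_mul _ (Filter.Tendsto.const_sub 1 h0)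
        have heq : (fun n : ℕ => Vo^[n+1] Pbar - Pbar)
            = fun n : ℕ => (L - Pbar) * (1 - (a ^ 2) ^ (n+1)) := funext fun n => hiter (n+1)
        rw [heq]; simpa using this
      exact le_of_tendsto htend (Filter.Eventually.of_forall hle)
  · intro hCgt M hM
    exact lt_of_le_of_lt (hub M) hCgt
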